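/- arXiv:2401.03566 — 3 statements merged into one kernel-verified Lean document; each statement's English description precedes it below -/
import Mathlib

section
/- Let Δ = Δ_1 ⊔ … ⊔ Δ_m be a partition of a finite root system Δ into m ≥ 2 nonempty parts such that each Δ_i and each Δ_i ⊔ Δ_j is closed. If β, γ ∈ Δ are roots with β - γ ∈ Δ, and both β, -β ∈ Δ_a for some index a, and both γ, -γ ∈ Δ_b for some index b, then a = b. -/
/-- A subset `S` of a root system `Δ` (in an ambient additive group `V`) is closed if
`α, β ∈ S` and `α + β ∈ Δ` imply `α + β ∈ S`. -/
def RootClosed {V : Type*} [AddCommGroup V] (Δ S : Set V) : Prop :=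
  ∀ a ∈ S, ∀ b ∈ S, a + b ∈ Δ → a + b ∈ S

namespace RootClosed

variable {V : Type*} [AddCommGroup V] {Δ S T : Set V}

theorem mem_of_add_mem (hS : RootClosed Δ S) {x y : V} (hxy : x + y ∈ S) (hy : -y ∈ S)
    (hx : x ∈ Δ) : x ∈ S := by
  have hcancel : x + y + -y = x := add_neg_cancel_right x y
  rw [← hcancel] at hx ⊢
  exact hS _ hxy _ hy hx

/-- If `β - γ ∈ Δ`, the root `β - γ` lies in `S` or in `T`; in either case cancelling `-β`
or `γ` puts a root of one part into the other. -/
theorem not_disjoint_of_sub_mem (hS : RootClosed Δ S) (hT : RootClosed Δ T)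
    (hST : RootClosed Δ (S ∪ T)) {β γ : V} (hβS : β ∈ S) (hnβS : -β ∈ S)
    (hγT : γ ∈ T) (hnγT : -γ ∈ T) (hβ : β ∈ Δ) (hnγ : -γ ∈ Δ) (hdiff : β - γ ∈ Δ) :
    ¬Disjoint S T := by
  intro hdisj
  rw [sub_eq_add_neg] at hdiff
  rcases hST β (Or.inl hβS) (-γ) (Or.inr hnγT) hdiff with hS' | hT'
  · rw [add_comm] at hS'
    exact Set.disjoint_left.mp hdisj (hS.mem_of_add_mem hS' hnβS hnγ) hnγT
  · exact Set.disjoint_left.mp hdisj hβS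
      (hT.mem_of_add_mem hT' (by rwa [neg_neg]) hβ)

end RootClosed

theorem stmt1_general {V : Type*} [AddCommGroup V] (Δ : Set V)
    (hsymm : ∀ α ∈ Δ, -α ∈ Δ)
    (m : ℕ) (P : Fin m → Set V)
    (hdisj : Pairwise fun i j => Disjoint (P i) (P j))
    (hclosed : ∀ i, RootClosed Δ (P i))
    (hclosed2 : ∀ i j, i ≠ j → RootClosed Δ (P i ∪ P j))
    (β γ : V) (hβ : β ∈ Δ) (hγ : γ ∈ Δ) (hdiff : β - γ ∈ Δ)
    (a b : Fin m)
    (hβa : β ∈ P a) (hnβa : -β ∈ P a)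
    (hγb : γ ∈ P b) (hnγb : -γ ∈ P b) :
    a = b := by
  by_contra hab
  exact RootClosed.not_disjoint_of_sub_mem (hclosed a) (hclosed b) (hclosed2 a b hab)
    hβa hnβa hγb hnγb hβ (hsymm γ hγ) hdiff (hdisj hab)

theorem stmt1 {V : Type*} [AddCommGroup V] (Δ : Set V)
    (hfin : Δ.Finite) (hzero : (0 : V) ∉ Δ) (hsymm : ∀ α ∈ Δ, -α ∈ Δ)
    (m : ℕ) (hm : 2 ≤ m) (P : Fin m → Set V)
    (hcover : (⋃ i, P i) = Δ)
    (hne : ∀ i, (P i).Nonempty)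
    (hdisj : Pairwise fun i j => Disjoint (P i) (P j))
    (hclosed : ∀ i, RootClosed Δ (P i))
    (hclosed2 : ∀ i j, i ≠ j → RootClosed Δ (P i ∪ P j))
    (β γ : V) (hβ : β ∈ Δ) (hγ : γ ∈ Δ) (hdiff : β - γ ∈ Δ)
    (a b : Fin m)
    (hβa : β ∈ P a) (hnβa : -β ∈ P a)
    (hγb : γ ∈ P b) (hnγb : -γ ∈ P b) :
    a = b :=
  stmt1_general Δ hsymm m P hdisj hclosed hclosed2 β γ hβ hγ hdiff a b hβa hnβa hγb hnγb
end

section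
/- Let Δ = Δ_1 ⊔ Δ_2 ⊔ Δ_3 ⊔ Δ_4 be a partition of a finite root system into four parts such that each part and each union of two parts is closed. Suppose β, γ ∈ Δ with β - γ ∈ Δ. Then it is impossible that β ∈ Δ_1, -β ∈ Δ_2, γ ∈ Δ_3, -γ ∈ Δ_4. -/
section Partition

variable {ι V : Type*} {P : ι → Set V}

lemma mem_union_of_add_eq [AddCommGroup V] {Δ : Set V}
    (hclosed2 : ∀ i j, i ≠ j → RootClosed Δ (P i ∪ P j))
    {i j : ι} (hij : i ≠ j) {a b c : V} (ha : a ∈ P i) (hb : b ∈ P j) (hc : c ∈ Δ)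
    (habc : a + b = c) : c ∈ P i ∪ P j := by
  subst habc
  exact hclosed2 i j hij a (Or.inl ha) b (Or.inr hb) hc

lemma not_mem_union_of_mem_of_pairwise_disjoint (hdisj : Pairwise fun i j => Disjoint (P i) (P j))
    {i j k : ι} (hik : i ≠ k) (hjk : j ≠ k) {x : V} (hx : x ∈ P k) : x ∉ P i ∪ P j := by
  rintro (hxi | hxj)
  · exact (hdisj hik).ne_of_mem hxi hx rfl
  · exact (hdisj hjk).ne_of_mem hxj hx rfl

end Partition

theorem stmt3_general {V : Type*} [AddCommGroup V] (Δ : Set V)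
    (hsymm : ∀ α ∈ Δ, -α ∈ Δ)
    (P : Fin 4 → Set V)
    (hdisj : Pairwise fun i j => Disjoint (P i) (P j))
    (hclosed2 : ∀ i j, i ≠ j → RootClosed Δ (P i ∪ P j))
    (β γ : V) (hβ : β ∈ Δ) (hγ : γ ∈ Δ) (hdiff : β - γ ∈ Δ) :
    ¬(β ∈ P 0 ∧ -β ∈ P 1 ∧ γ ∈ P 2 ∧ -γ ∈ P 3) := by
  rintro ⟨h0, h1, h2, h3⟩
  rcases mem_union_of_add_eq hclosed2 (by decide) h0 h3 hdiff (sub_eq_add_neg β γ).symm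
    with hdiff0 | hdiff3
  · have h01 : -γ ∈ P 0 ∪ P 1 :=
      mem_union_of_add_eq hclosed2 (by decide) hdiff0 h1 (hsymm γ hγ) (by abel)
    exact not_mem_union_of_mem_of_pairwise_disjoint hdisj (by decide) (by decide) h3 h01
  · have h32 : β ∈ P 3 ∪ P 2 :=
      mem_union_of_add_eq hclosed2 (by decide) hdiff3 h2 hβ (sub_add_cancel β γ)
    exact not_mem_union_of_mem_of_pairwise_disjoint hdisj (by decide) (by decide) h0 h32

theorem stmt3 {V : Type*} [AddCommGroup V] (Δ : Set V)
    (hfin : Δ.Finite) (hzero : (0 : V) ∉ Δ) (hsymm : ∀ α ∈ Δ, -α ∈ Δ)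
    (P : Fin 4 → Set V)
    (hcover : (⋃ i, P i) = Δ)
    (hne : ∀ i, (P i).Nonempty)
    (hdisj : Pairwise fun i j => Disjoint (P i) (P j))
    (hclosed : ∀ i, RootClosed Δ (P i))
    (hclosed2 : ∀ i j, i ≠ j → RootClosed Δ (P i ∪ P j))
    (β γ : V) (hβ : β ∈ Δ) (hγ : γ ∈ Δ) (hdiff : β - γ ∈ Δ) :
    ¬(β ∈ P 0 ∧ -β ∈ P 1 ∧ γ ∈ P 2 ∧ -γ ∈ P 3) :=
  stmt3_general Δ hsymm P hdisj hclosed2 β γ hβ hγ hdiff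
end

section
/- Let Δ = S_1 ⊔ S_2 be a partition of a finite root system into two closed subsets, and let S_i^s = S_i ∩ (-S_i) be the symmetric parts. Then S_1^s and S_2^s are strongly orthogonal: for every α ∈ S_1^s and β ∈ S_2^s, neither α + β nor α - β is a root. -/
namespace RootClosed

variable {V : Type*} [AddCommGroup V] {Δ S S₁ S₂ : Set V}

theorem mem_of_add_mem_of_neg_mem (hS : RootClosed Δ S) {a b : V} (hab : a + b ∈ S)
    (ha : -a ∈ S) (hb : b ∈ Δ) : b ∈ S := by
  simpa using hS _ hab _ ha (by simpa using hb)

theorem add_notMem_of_partition (hcover : S₁ ∪ S₂ = Δ) (hdisj : Disjoint S₁ S₂)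
    (hclosed1 : RootClosed Δ S₁) (hclosed2 : RootClosed Δ S₂) {a b : V}
    (ha : a ∈ S₁) (ha' : -a ∈ S₁) (hb : b ∈ S₂) (hb' : -b ∈ S₂) : a + b ∉ Δ := by
  intro hab
  rw [← hcover] at hab
  rcases hab with hab₁ | hab₂
  · have hb₁ : b ∈ S₁ := hclosed1.mem_of_add_mem_of_neg_mem hab₁ ha' (hcover ▸ Or.inr hb)
    exact hdisj.notMem_of_mem_left hb₁ hb
  · rw [add_comm] at hab₂
    have ha₂ : a ∈ S₂ := hclosed2.mem_of_add_mem_of_neg_mem hab₂ hb' (hcover ▸ Or.inl ha)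
    exact hdisj.notMem_of_mem_left ha ha₂

end RootClosed

theorem stmt16_general {V : Type*} [AddCommGroup V] (Δ : Set V)
    (S₁ S₂ : Set V)
    (hcover : S₁ ∪ S₂ = Δ) (hdisj : Disjoint S₁ S₂)
    (hclosed1 : RootClosed Δ S₁) (hclosed2 : RootClosed Δ S₂) :
    ∀ α ∈ S₁ ∩ (-S₁), ∀ β ∈ S₂ ∩ (-S₂), α + β ∉ Δ ∧ α - β ∉ Δ := by
  rintro α ⟨hα, hα'⟩ β ⟨hβ, hβ'⟩
  rw [Set.mem_neg] at hα' hβ'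
  refine ⟨RootClosed.add_notMem_of_partition hcover hdisj hclosed1 hclosed2 hα hα' hβ hβ', ?_⟩
  rw [sub_eq_add_neg]
  exact RootClosed.add_notMem_of_partition hcover hdisj hclosed1 hclosed2 hα hα' hβ'
    (by rwa [neg_neg])

theorem stmt16 {V : Type*} [AddCommGroup V] (Δ : Set V)
    (hfin : Δ.Finite) (hzero : (0 : V) ∉ Δ) (hsymm : ∀ α ∈ Δ, -α ∈ Δ)
    (S₁ S₂ : Set V)
    (hcover : S₁ ∪ S₂ = Δ) (hdisj : Disjoint S₁ S₂)
    (hclosed1 : RootClosed Δ S₁) (hclosed2 : RootClosed Δ S₂) :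
    ∀ α ∈ S₁ ∩ (-S₁), ∀ β ∈ S₂ ∩ (-S₂), α + β ∉ Δ ∧ α - β ∉ Δ :=
  stmt16_general Δ S₁ S₂ hcover hdisj hclosed1 hclosed2
end
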